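/- Let m ≥ 2, let A be an m×m primitive binary matrix, and let q ≥ 2 be an integer. Then there exists a unique vector (t_0,…,t_{m−1}) with all entries positive real numbers satisfying t_i^q = Σ_{j=0}^{m−1} A(i,j) t_j for all 0 ≤ i ≤ m−1. -/

import Mathlib

/-!
Existence: the map `t ↦ (A t)^(1/q)` is monotone on nonnegative vectors. A primitive matrix has
no zero row, so `(A 1)_i ≥ 1`; and if `M ≥ 1` bounds every row sum, `(A M)_i ≤ M² ≤ M^q`. Hence
the map sends the box `[1, M]^m` into itself and has a fixed point there by Knaster–Tarski.

Uniqueness: for solutions `a`, `b` with `b > 0`, let `c = a_i / b_i` be maximal at `i = i₀`.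
Then `c^q b_{i₀}^q = a_{i₀}^q = (A a)_{i₀} ≤ c (A b)_{i₀} = c b_{i₀}^q`, so `c^q ≤ c` and
`c ≤ 1` because `q > 1`; that is, `a ≤ b`.
-/

open Filter Topology

/-- Sequences over the alphabet `{0,…,m−1}`; coordinate `n` represents position `n+1`. -/
def ASeq (m : ℕ) : Type := ℕ → Fin m

open Classical in
/-- The distance `d(x,y) = m^{-min{i ≥ 1 : x_i ≠ y_i}}` on `Σ_m^ℕ`
(in the 0-based representation, `min{i ≥ 1 : x_i ≠ y_i} = firstDiff x y + 1`). -/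
noncomputable def aseqDist (m : ℕ) (x y : ASeq m) : ℝ :=
  if x = y then 0 else ((m : ℝ)⁻¹) ^ (PiNat.firstDiff x y + 1)

lemma aseqDist_self (m : ℕ) (x : ASeq m) : aseqDist m x x = 0 := by
  simp [aseqDist]

lemma aseqDist_comm (m : ℕ) (x y : ASeq m) : aseqDist m x y = aseqDist m y x := by
  unfold aseqDist
  by_cases h : x = y
  · simp [h]
  · rw [if_neg h, if_neg (Ne.symm h)]
    congr 2
    exact PiNat.firstDiff_comm (E := fun _ => Fin m) x y

lemma aseqDist_triangle (m : ℕ) (x y z : ASeq m) :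
    aseqDist m x z ≤ aseqDist m x y + aseqDist m y z := by
  classical
  unfold aseqDist
  rcases Nat.eq_zero_or_pos m with hm | hm
  · subst hm; exact (x 0).elim0
  have hr0 : (0:ℝ) ≤ (m : ℝ)⁻¹ := by positivity
  have hr1 : (m : ℝ)⁻¹ ≤ 1 := by
    rw [inv_le_one_iff₀]; right; exact_mod_cast hm
  by_cases hxz : x = z
  · rw [if_pos hxz]
    have h1 : (0:ℝ) ≤ if x = y then 0 else ((m : ℝ)⁻¹) ^ (PiNat.firstDiff x y + 1) := by
      split <;> positivity
    have h2 : (0:ℝ) ≤ if y = z then 0 else ((m : ℝ)⁻¹) ^ (PiNat.firstDiff y z + 1) := by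
      split <;> positivity
    linarith
  · rw [if_neg hxz]
    by_cases hxy : x = y
    · subst hxy; rw [if_pos rfl, if_neg hxz]; simp
    by_cases hyz : y = z
    · subst hyz; rw [if_pos rfl, if_neg hxz]; simp
    rw [if_neg hxy, if_neg hyz]
    have hmin := PiNat.min_firstDiff_le x y z hxz
    have hpos1 : (0:ℝ) ≤ ((m : ℝ)⁻¹) ^ (PiNat.firstDiff x y + 1) := by positivity
    have hpos2 : (0:ℝ) ≤ ((m : ℝ)⁻¹) ^ (PiNat.firstDiff y z + 1) := by positivity
    rcases le_total (PiNat.firstDiff x y) (PiNat.firstDiff y z) with hcmp | hcmp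
    · have : ((m : ℝ)⁻¹) ^ (PiNat.firstDiff x z + 1) ≤
          ((m : ℝ)⁻¹) ^ (PiNat.firstDiff x y + 1) := by
        apply pow_le_pow_of_le_one hr0 hr1
        simp only [min_eq_left hcmp] at hmin; omega
      linarith
    · have : ((m : ℝ)⁻¹) ^ (PiNat.firstDiff x z + 1) ≤
          ((m : ℝ)⁻¹) ^ (PiNat.firstDiff y z + 1) := by
        apply pow_le_pow_of_le_one hr0 hr1
        simp only [min_eq_right hcmp] at hmin; omega
      linarith

lemma aseqDist_eq_zero (m : ℕ) (x y : ASeq m) (h : aseqDist m x y = 0) : x = y := by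
  by_contra hxy
  unfold aseqDist at h
  rw [if_neg hxy] at h
  rcases Nat.eq_zero_or_pos m with hm | hm
  · subst hm; exact (x 0).elim0
  have : (0:ℝ) < ((m : ℝ)⁻¹) ^ (PiNat.firstDiff x y + 1) := by positivity
  linarith

noncomputable instance ASeq.metricSpace (m : ℕ) : MetricSpace (ASeq m) where
  dist := aseqDist m
  dist_self := aseqDist_self m
  dist_comm := aseqDist_comm m
  dist_triangle := aseqDist_triangle m
  eq_of_dist_eq_zero := aseqDist_eq_zero m _ _

theorem MonotoneOn.exists_mem_Icc_isFixedPt {α : Type*} [ConditionallyCompleteLattice α]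
    {f : α → α} {a b : α} (hf : MonotoneOn f (Set.Icc a b)) (hab : a ≤ b) (ha : a ≤ f a)
    (hb : f b ≤ b) : ∃ x ∈ Set.Icc a b, Function.IsFixedPt f x := by
  have : Fact (a ≤ b) := ⟨hab⟩
  have hmaps : Set.MapsTo f (Set.Icc a b) (Set.Icc a b) := fun x hx =>
    ⟨ha.trans (hf ⟨le_rfl, hab⟩ hx hx.1), (hf hx ⟨hab, le_rfl⟩ hx.2).trans hb⟩
  let g : Set.Icc a b →o Set.Icc a b := ⟨hmaps.restrict f _ _, fun x y h => hf x.2 y.2 h⟩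
  exact ⟨g.lfp, g.lfp.2, congrArg Subtype.val g.map_lfp⟩

namespace Matrix

theorem exists_ne_zero_of_pow_succ_apply_ne_zero {n R : Type*} [Fintype n] [DecidableEq n]
    [Semiring R] {A : Matrix n n R} {k : ℕ} {i j : n} (h : (A ^ (k + 1)) i j ≠ 0) :
    ∃ l, A i l ≠ 0 := by
  by_contra! hrow
  rw [pow_succ', mul_apply] at h
  exact h (Finset.sum_eq_zero fun l _ => by rw [hrow l, zero_mul])

variable {ι : Type*} [Fintype ι] {A : Matrix ι ι ℝ} {q : ℕ}

theorem mulVec_nonneg (hA : ∀ i j, 0 ≤ A i j) {t : ι → ℝ} (ht : 0 ≤ t) : 0 ≤ A *ᵥ t := fun i =>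
  dotProduct_nonneg_of_nonneg (hA i) ht

theorem mulVec_mono_of_nonneg (hA : ∀ i j, 0 ≤ A i j) {t s : ι → ℝ} (h : t ≤ s) :
    A *ᵥ t ≤ A *ᵥ s := fun i =>
  dotProduct_le_dotProduct_of_nonneg_left h (hA i)

theorem le_of_pow_eq_mulVec (hA : ∀ i j, 0 ≤ A i j) (hq : 1 < q) {a b : ι → ℝ}
    (ha_eq : ∀ i, a i ^ q = (A *ᵥ a) i)
    (hb : ∀ i, 0 < b i) (hb_eq : ∀ i, b i ^ q = (A *ᵥ b) i) : a ≤ b := by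
  intro i
  by_contra! hi
  have : Nonempty ι := ⟨i⟩
  obtain ⟨i₀, hi₀⟩ := Finite.exists_max fun i => a i / b i
  set c := a i₀ / b i₀
  have hc : 1 < c := ((one_lt_div (hb i)).mpr hi).trans_le (hi₀ i)
  have ha_le : a ≤ c • b := fun j => (div_le_iff₀ (hb j)).mp (hi₀ j)
  have hcq : c ^ q * b i₀ ^ q ≤ c * b i₀ ^ q :=
    calc c ^ q * b i₀ ^ q = a i₀ ^ q := by rw [← mul_pow, div_mul_cancel₀ _ (hb i₀).ne']
      _ = (A *ᵥ a) i₀ := ha_eq i₀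
      _ ≤ (A *ᵥ (c • b)) i₀ := mulVec_mono_of_nonneg hA ha_le i₀
      _ = c * b i₀ ^ q := by rw [mulVec_smul, Pi.smul_apply, hb_eq, smul_eq_mul]
  exact (lt_self_pow₀ hc hq).not_ge (le_of_mul_le_mul_right hcq (pow_pos (hb i₀) q))

theorem exists_pos_pow_eq_mulVec (hA : ∀ i j, 0 ≤ A i j) (hrow : ∀ i, 1 ≤ ∑ j, A i j)
    (hq : 1 < q) : ∃ t : ι → ℝ, (∀ i, 0 < t i) ∧ ∀ i, t i ^ q = (A *ᵥ t) i := by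
  have hq₀ : (0 : ℝ) < q := by exact_mod_cast (zero_lt_one.trans hq)
  set M : ℝ := 1 + ∑ i, ∑ j, A i j
  have hM : 1 ≤ M := le_add_of_nonneg_right <| Finset.sum_nonneg fun i _ =>
    Finset.sum_nonneg fun j _ => hA i j
  have hrow_le : ∀ i, ∑ j, A i j ≤ M := fun i =>
    (Finset.single_le_sum (fun i _ => Finset.sum_nonneg fun j _ => hA i j)
      (Finset.mem_univ i)).trans (le_add_of_nonneg_left zero_le_one)
  set F : (ι → ℝ) → ι → ℝ := fun t i => (A *ᵥ t) i ^ (q⁻¹ : ℝ)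
  have hF_mono : MonotoneOn F (Set.Icc 1 fun _ => M) := fun t ht s _ hts i =>
    Real.rpow_le_rpow (mulVec_nonneg hA (zero_le_one.trans ht.1) i)
      (mulVec_mono_of_nonneg hA hts i) (by positivity)
  have hF_one : 1 ≤ F 1 := fun i =>
    Real.one_le_rpow (by simpa [mulVec, dotProduct] using hrow i) (by positivity)
  have hF_M : F (fun _ => M) ≤ fun _ => M := fun i => by
    have hM₀ : 0 ≤ M := zero_le_one.trans hM
    show (A *ᵥ fun _ => M) i ^ (q⁻¹ : ℝ) ≤ M
    rw [Real.rpow_inv_le_iff_of_pos (mulVec_nonneg hA (fun _ => hM₀) i) hM₀ hq₀,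
      Real.rpow_natCast]
    calc (A *ᵥ fun _ => M) i = (∑ j, A i j) * M := by simp [mulVec, dotProduct, Finset.sum_mul]
      _ ≤ M * M := by gcongr; exact hrow_le i
      _ = M ^ 2 := (sq M).symm
      _ ≤ M ^ q := pow_le_pow_right₀ hM hq
  obtain ⟨t, ht, hfix⟩ := hF_mono.exists_mem_Icc_isFixedPt (fun _ => hM) hF_one hF_M
  refine ⟨t, fun i => zero_lt_one.trans_le (ht.1 i), fun i => ?_⟩
  rw [← congrFun hfix i]
  exact Real.rpow_inv_natCast_pow (mulVec_nonneg hA (zero_le_one.trans ht.1) i) (by omega)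

end Matrix

theorem exists_unique_positive_solution_general
    (m : ℕ) (A : Matrix (Fin m) (Fin m) ℕ)
    (hprim : ∃ n : ℕ, 1 ≤ n ∧ ∀ i j : Fin m, 0 < (A ^ n) i j)
    (q : ℕ) (hq : 2 ≤ q) :
    ∃! t : Fin m → ℝ,
      (∀ i, 0 < t i) ∧ ∀ i, t i ^ q = ∑ j, (A i j : ℝ) * t j := by
  obtain ⟨n, hn, hA⟩ := hprim
  obtain ⟨k, rfl⟩ : ∃ k, n = k + 1 := Nat.exists_eq_add_of_le' hn
  have hnonneg : ∀ i j, 0 ≤ A.map (Nat.cast : ℕ → ℝ) i j := fun i j => Nat.cast_nonneg _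
  have hrow : ∀ i, 1 ≤ ∑ j, A.map (Nat.cast : ℕ → ℝ) i j := fun i => by
    obtain ⟨l, hl⟩ := Matrix.exists_ne_zero_of_pow_succ_apply_ne_zero (hA i i).ne'
    calc (1 : ℝ) ≤ A i l := by exact_mod_cast Nat.one_le_iff_ne_zero.mpr hl
      _ ≤ ∑ j, (A i j : ℝ) := Finset.single_le_sum (fun j _ => hnonneg i j) (Finset.mem_univ l)
  obtain ⟨t, ht⟩ := Matrix.exists_pos_pow_eq_mulVec hnonneg hrow hq
  exact ⟨t, ht, fun s hs => le_antisymm (Matrix.le_of_pow_eq_mulVec hnonneg hq hs.2 ht.1 ht.2)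
    (Matrix.le_of_pow_eq_mulVec hnonneg hq ht.2 hs.1 hs.2)⟩

/-- For a primitive binary matrix `A` and `q ≥ 2` there is a unique vector `t` with all
entries positive such that `t_i^q = Σ_j A(i,j) t_j` for all `i`. -/
theorem exists_unique_positive_solution
    (m : ℕ) (hm : 2 ≤ m) (A : Matrix (Fin m) (Fin m) ℕ)
    (hbin : ∀ i j, A i j ≤ 1)
    (hprim : ∃ n : ℕ, 1 ≤ n ∧ ∀ i j : Fin m, 0 < (A ^ n) i j)
    (q : ℕ) (hq : 2 ≤ q) :
    ∃! t : Fin m → ℝ,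
      (∀ i, 0 < t i) ∧ ∀ i, t i ^ q = ∑ j, (A i j : ℝ) * t j :=
  exists_unique_positive_solution_general m A hprim q hq
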